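/- arXiv:0709.3620 — 7 statements merged into one kernel-verified Lean document; each statement's English description precedes it below -/
import Mathlib

section
/- Let (M, d) be a bounded metric space. Suppose there exist an element m ∈ M, a surjective isometry V : M → M, and a constant K > 1 such that d(V x, x) ≥ K · d(m, x) for all x ∈ M. Then m is a fixed point of every surjective isometry S : M → M, i.e., S m = m. -/
/-- **Lemma 2.1 (Vogt/Aronszajn).** Let `(M, d)` be a bounded metric space. Suppose there
exist `m ∈ M`, a surjective isometry `V : M → M` and a constant `K > 1` such that
`d(V x, x) ≥ K · d(m, x)` for all `x`. Then `m` is a fixed point of every surjective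
isometry `S : M → M`. -/
theorem fixed_point_of_surjective_isometry
    {M : Type*} [MetricSpace M]
    (hbdd : ∃ N : ℝ, 0 < N ∧ ∀ x y : M, dist x y ≤ N)
    (m : M) (V : M → M)
    (hVsurj : Function.Surjective V)
    (hViso : ∀ x y : M, dist (V x) (V y) = dist x y)
    (K : ℝ) (hK : 1 < K)
    (hV : ∀ x : M, dist (V x) x ≥ K * dist m x)
    (S : M → M) (hSsurj : Function.Surjective S)
    (hSiso : ∀ x y : M, dist (S x) (S y) = dist x y) :
    S m = m := by
  obtain ⟨N, hN0, hN⟩ := hbdd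
  have hK0 : (0:ℝ) < K := lt_trans one_pos hK
  -- Step 1 : V m = m
  have hVm : V m = m := by
    have h1 : K * dist m (V m) ≤ dist (V m) m := by
      have := hV (V m)
      rwa [hViso] at this
    rw [dist_comm (V m) m] at h1
    have h2 : dist m (V m) ≤ 0 := by nlinarith [dist_nonneg (x := m) (y := V m)]
    have h3 : dist m (V m) = 0 := le_antisymm h2 dist_nonneg
    have h4 : dist (V m) m = 0 := by rw [dist_comm]; exact h3
    exact dist_eq_zero.mp h4
  have hVinj : Function.Injective V := fun a b h => by
    have : dist a b = 0 := by rw [← hViso, h, dist_self]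
    exact dist_eq_zero.mp this
  -- The set of displacements of m under surjective isometries
  set A : Set ℝ := {r | ∃ T : M → M, Function.Surjective T ∧
      (∀ x y : M, dist (T x) (T y) = dist x y) ∧ r = dist (T m) m} with hA
  have hAne : A.Nonempty := ⟨dist (S m) m, S, hSsurj, hSiso, rfl⟩
  have hAbdd : BddAbove A := by
    refine ⟨N, ?_⟩
    rintro r ⟨T, -, -, rfl⟩
    exact hN _ _
  set L := sSup A with hL
  -- Step 2 : for every a ∈ A, K * a ≤ L
  have key : ∀ a ∈ A, K * a ≤ L := by
    rintro a ⟨T, hTsurj, hTiso, rfl⟩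
    set iV := Function.surjInv hVsurj with hiV
    set iT := Function.surjInv hTsurj with hiT
    have hViV : ∀ y, V (iV y) = y := fun y => Function.surjInv_eq hVsurj y
    have hTiT : ∀ y, T (iT y) = y := fun y => Function.surjInv_eq hTsurj y
    have hTinj : Function.Injective T := fun a b h => by
      have : dist a b = 0 := by rw [← hTiso, h, dist_self]
      exact dist_eq_zero.mp this
    have hiVV : ∀ x, iV (V x) = x := fun x => hVinj (hViV (V x))
    have hiTT : ∀ x, iT (T x) = x := fun x => hTinj (hTiT (T x))
    -- the conjugated map W = V⁻¹ ∘ T⁻¹ ∘ V ∘ T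
    set W : M → M := fun x => iV (iT (V (T x))) with hW
    have hWiso : ∀ x y : M, dist (W x) (W y) = dist x y := by
      intro x y
      have h1 : dist (iV (iT (V (T x)))) (iV (iT (V (T y))))
          = dist (iT (V (T x))) (iT (V (T y))) := by
        rw [← hViso (iV (iT (V (T x)))) (iV (iT (V (T y)))), hViV, hViV]
      have h2 : dist (iT (V (T x))) (iT (V (T y))) = dist (V (T x)) (V (T y)) := by
        rw [← hTiso (iT (V (T x))) (iT (V (T y))), hTiT, hTiT]
      simp only [hW, h1, h2, hViso, hTiso]
    have hWsurj : Function.Surjective W := by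
      intro y
      obtain ⟨u, hu⟩ := hVsurj (T (V y))
      obtain ⟨x, hx⟩ := hTsurj u
      refine ⟨x, ?_⟩
      simp only [hW]
      rw [hx, hu, hiTT, hiVV]
    have hWmem : dist (W m) m ∈ A := ⟨W, hWsurj, hWiso, rfl⟩
    have hWm : dist (W m) m = dist (V (T m)) (T m) := by
      have h1 : dist (W m) m = dist (V (W m)) (V m) := (hViso _ _).symm
      rw [h1, hVm]
      simp only [hW, hViV]
      have h2 : dist (iT (V (T m))) m = dist (T (iT (V (T m)))) (T m) := (hTiso _ _).symm
      rw [h2, hTiT]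
    have h3 : K * dist m (T m) ≤ dist (V (T m)) (T m) := hV (T m)
    have h4 : dist (V (T m)) (T m) ≤ L := hWm ▸ le_csSup hAbdd hWmem
    rw [dist_comm (T m) m]
    linarith
  -- Step 3 : conclude L ≤ 0
  have hLle : L ≤ L / K := by
    apply csSup_le hAne
    intro a ha
    rw [le_div_iff₀ hK0]
    calc a * K = K * a := mul_comm _ _
    _ ≤ L := key a ha
  have hL0 : L ≤ 0 := by
    rcases le_or_gt L 0 with h | h
    · exact h
    · exfalso
      have : L < L := lt_of_le_of_lt hLle (by rw [div_lt_iff₀ hK0]; nlinarith)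
      exact lt_irrefl _ this
  have hmem : dist (S m) m ∈ A := ⟨S, hSsurj, hSiso, rfl⟩
  have : dist (S m) m ≤ 0 := le_trans (le_csSup hAbdd hmem) hL0
  exact dist_eq_zero.mp (le_antisymm this dist_nonneg)
end

section
/- Let 0 < p ≤ 1 and let E and F be p-normed spaces. Let T : E → F be a continuous map with T(0) = 0 which preserves equality of distance and satisfies 2·T(x) − T(y) ∈ T(E) for all x, y ∈ E. Then T is (real) linear. -/
/-- For `0 < p ≤ 1`, a `p`-norm on a real vector space `E`: a non-negative function
`‖·‖` with `‖x‖ = 0` iff `x = 0`, `‖a • x‖ = |a|^p · ‖x‖` for all `a : ℝ`, and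
`‖x + y‖ ≤ ‖x‖ + ‖y‖`.  A real vector space with a `p`-norm (and the induced metric
`d(x,y) = ‖x - y‖`) is a `p`-normed space. -/
structure PNorm (p : ℝ) (E : Type*) [AddCommGroup E] [Module ℝ E] where
  toFun : E → ℝ
  nonneg : ∀ x, 0 ≤ toFun x
  eq_zero_iff : ∀ x, toFun x = 0 ↔ x = 0
  smul_eq : ∀ (a : ℝ) (x : E), toFun (a • x) = |a| ^ p * toFun x
  add_le : ∀ x y, toFun (x + y) ≤ toFun x + toFun y

/-!
Give `E` and `F` the topologies of their `p`-norms. If `T` is injective, `d x y = ‖T x - T y‖` is a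
metric on `E`. Since `T` preserves equality of distance, point reflections of `E` are
`d`-isometries; by the range condition so is the map `τ` with `T (τ x) = 2 • T m - T x`, which
swaps `u` and `z := τ u` and moves every point `x` by `2 ^ p` times `d x m`. Väisälä's argument
for the Mazur–Ulam theorem then shows that the isometry `x ↦ u + z - τ x` fixes `m`, i.e.
`T (2 • m - u) = 2 • T m - T u`. This makes `T` additive, and a continuous additive map between
real topological vector spaces is linear.

If `T a = T b` with `a ≠ b`, then `s ↦ T (s • (a - b))` is `1`-periodic, hence bounded by
continuity. Every norm is attained on the line through `a - b`, so `T` is bounded; but the range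
condition puts every `n • T x` in the range of `T`, so `T = 0`.
-/

open Filter Topology Function Set

namespace PNorm

variable {p : ℝ} {E : Type*} [AddCommGroup E] [Module ℝ E] (ν : PNorm p E)

theorem map_neg (x : E) : ν.toFun (-x) = ν.toFun x := by
  rw [← neg_one_smul ℝ x, ν.smul_eq, abs_neg, abs_one, Real.one_rpow, one_mul]

def toAddGroupNorm : AddGroupNorm E where
  toFun := ν.toFun
  map_zero' := (ν.eq_zero_iff 0).2 rfl
  add_le' := ν.add_le
  neg' := ν.map_neg
  eq_zero_of_map_eq_zero' x := (ν.eq_zero_iff x).1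

end PNorm

class PNormedSpace (p : outParam ℝ) (E : Type*) [SeminormedAddCommGroup E] [Module ℝ E] :
    Prop where
  norm_smul : ∀ (a : ℝ) (x : E), ‖a • x‖ = |a| ^ p * ‖x‖

namespace PNormedSpace

variable {p : ℝ} {E : Type*}

section Seminormed

variable [SeminormedAddCommGroup E] [Module ℝ E] [PNormedSpace p E]

theorem tendsto_smul_zero (hp : 0 < p) {α : Type*} {l : Filter α} {a : α → ℝ} {x : α → E}
    {b : ℝ} {y : E} (ha : Tendsto a l (𝓝 b)) (hx : Tendsto x l (𝓝 y)) (hby : b = 0 ∨ y = 0) :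
    Tendsto (fun i => a i • x i) l (𝓝 0) := by
  rw [tendsto_zero_iff_norm_tendsto_zero]
  simp only [norm_smul]
  convert (ha.abs.rpow_const (Or.inr hp.le)).mul hx.norm
  rcases hby with rfl | rfl <;> simp [hp.ne']

theorem continuousSMul (hp : 0 < p) : ContinuousSMul ℝ E :=
  .of_nhds_zero (tendsto_smul_zero hp tendsto_fst tendsto_snd (.inl rfl))
    (fun _ => tendsto_smul_zero hp tendsto_id tendsto_const_nhds (.inl rfl))
    (fun _ => tendsto_smul_zero hp tendsto_const_nhds tendsto_id (.inr rfl))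

theorem exists_norm_smul_eq (hp : 0 < p) {w : E} (hw : 0 < ‖w‖) {t : ℝ} (ht : 0 ≤ t) :
    ∃ s : ℝ, ‖s • w‖ = t := by
  refine ⟨(t / ‖w‖) ^ p⁻¹, ?_⟩
  rw [norm_smul, abs_of_nonneg (by positivity), Real.rpow_inv_rpow (by positivity) hp.ne',
    div_mul_cancel₀ _ hw.ne']

end Seminormed

theorem eq_zero_of_forall_norm_natCast_smul_le [NormedAddCommGroup E] [Module ℝ E]
    [PNormedSpace p E] (hp : 0 < p) {y : E} {M : ℝ} (h : ∀ n : ℕ, ‖(n : ℝ) • y‖ ≤ M) : y = 0 := by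
  by_contra hy
  have h_top : Tendsto (fun n : ℕ => (n : ℝ) ^ p * ‖y‖) atTop atTop :=
    ((tendsto_rpow_atTop hp).comp tendsto_natCast_atTop_atTop).atTop_mul_const (norm_pos_iff.2 hy)
  obtain ⟨n, hn⟩ := (h_top.eventually_gt_atTop M).exists
  have := h n
  rw [norm_smul, Nat.abs_cast] at this
  linarith

end PNormedSpace

namespace PseudoMetric

variable {X : Type*} (d : PseudoMetric X ℝ)

theorem apply_eq_of_expanding_reflection (hd : ∀ x y, d x y = 0 → x = y) {u z m : X} {c : ℝ}
    (hc : 1 < c) (τ : Equiv.Perm X) (hτ : ∀ x y, d (τ x) (τ y) = d x y) (hτu : τ u = z)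
    (hτz : τ z = u) (hτm : τ m = m) (hτ_dist : ∀ x, d x (τ x) = c * d x m)
    (g : Equiv.Perm X) (hg : ∀ x y, d (g x) (g y) = d x y) (hgu : g u = u) (hgz : g z = z) :
    g m = m := by
  set s := {g : Equiv.Perm X | (∀ x y, d (g x) (g y) = d x y) ∧ g u = u ∧ g z = z}
  have h_bdd : BddAbove (range fun g : s => d ((g : Equiv.Perm X) m) m) := by
    refine ⟨d m u + d u m, forall_mem_range.2 fun ⟨g, hg, hgu, _⟩ => ?_⟩
    calc d (g m) m ≤ d (g m) u + d u m := d.triangle _ _ _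
      _ = d m u + d u m := by rw [← hg m u, hgu]
  -- Conjugating `τ` by `g` multiplies the displacement of `m` by `c`.
  set f : Equiv.Perm X → Equiv.Perm X := fun g => ((g.trans τ).trans g.symm).trans τ
  have hf_dist : ∀ g ∈ s, d (f g m) m = c * d (g m) m := by
    rintro g ⟨hg, -, -⟩
    calc d (f g m) m = d (g.symm (τ (g m))) (g.symm (g m)) := by
          simp only [f, Equiv.trans_apply, Equiv.symm_apply_apply]
          rw [← hτm, hτ, hτm]
      _ = c * d (g m) m := by
          rw [← hg, Equiv.apply_symm_apply, Equiv.apply_symm_apply, d.symm, hτ_dist]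
  have hf_mem : ∀ g ∈ s, f g ∈ s := by
    rintro g ⟨hg, hgu, hgz⟩
    have hg_symm : ∀ x y, d (g.symm x) (g.symm y) = d x y := fun x y => by
      rw [← hg, Equiv.apply_symm_apply, Equiv.apply_symm_apply]
    refine ⟨fun x y => ?_, ?_, ?_⟩
    · simp only [f, Equiv.trans_apply, hτ, hg_symm, hg]
    · simp only [f, Equiv.trans_apply, hgu, hτu, g.symm_apply_eq.2 hgz.symm, hτz]
    · simp only [f, Equiv.trans_apply, hgz, hτz, g.symm_apply_eq.2 hgu.symm, hτu]
  have : Nonempty s := ⟨⟨g, hg, hgu, hgz⟩⟩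
  set C := ⨆ g : s, d ((g : Equiv.Perm X) m) m
  have hC : C ≤ C / c := ciSup_le fun ⟨g, hg⟩ => by
    rw [le_div_iff₀ (by linarith), mul_comm, ← hf_dist g hg]
    exact le_ciSup h_bdd ⟨f g, hf_mem g hg⟩
  have hC0 : C ≤ 0 := by
    by_contra! hC0
    exact (div_lt_self hC0 hc).not_ge hC
  refine hd _ _ (le_antisymm ?_ (d.nonneg _ _))
  exact (le_ciSup h_bdd ⟨g, hg, hgu, hgz⟩).trans hC0

end PseudoMetric

theorem natCast_smul_mem_range {E F : Type*} [Zero E] [AddCommGroup F] [Module ℝ F] {T : E → F}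
    (hT0 : T 0 = 0) (hrange : ∀ x y, (2 : ℝ) • T x - T y ∈ range T) (x : E) (n : ℕ) :
    (n : ℝ) • T x ∈ range T := by
  suffices ∀ n : ℕ, (n : ℝ) • T x ∈ range T ∧ ((n + 1 : ℕ) : ℝ) • T x ∈ range T from (this n).1
  intro n
  induction n with
  | zero => exact ⟨⟨0, by simp [hT0]⟩, ⟨x, by simp⟩⟩
  | succ n ih =>
    obtain ⟨⟨a, ha⟩, ⟨b, hb⟩⟩ := ih
    obtain ⟨c, hc⟩ := hrange b a
    refine ⟨⟨b, hb⟩, ⟨c, ?_⟩⟩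
    rw [hc, ha, hb, smul_smul, ← sub_smul]
    push_cast
    ring_nf

theorem map_add_of_map_two_smul_sub {E F : Type*} [AddCommGroup E] [Module ℝ E] [AddCommGroup F]
    [Module ℝ F] {T : E → F} (hT0 : T 0 = 0)
    (h : ∀ m u, T ((2 : ℝ) • m - u) = (2 : ℝ) • T m - T u) (x y : E) :
    T (x + y) = T x + T y := by
  set m := (2⁻¹ : ℝ) • (x + y)
  have hm : (2 : ℝ) • m = x + y := smul_inv_smul₀ two_ne_zero _
  have hx : T x = (2 : ℝ) • T m - T y := by rw [← h, hm, add_sub_cancel_right]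
  have hxy : T (x + y) = (2 : ℝ) • T m := by simpa [hm, hT0] using h m 0
  rw [hxy, hx, sub_add_cancel]

def PreservesEqualityOfDistance {E F : Type*} [SeminormedAddCommGroup E]
    [SeminormedAddCommGroup F] (T : E → F) : Prop :=
  ∀ x y x' y', ‖x - y‖ = ‖x' - y'‖ → ‖T x - T y‖ = ‖T x' - T y'‖

section PreservesEqualityOfDistance

variable {p : ℝ} {E F : Type*} [NormedAddCommGroup E] [Module ℝ E] [NormedAddCommGroup F]
  {T : E → F}

theorem map_two_smul_sub_of_injective [Module ℝ F] [PNormedSpace p F] (hp : 0 < p)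
    (hinj : Injective T) (hT : PreservesEqualityOfDistance T)
    (hrange : ∀ x y, (2 : ℝ) • T x - T y ∈ range T) (m u : E) :
    T ((2 : ℝ) • m - u) = (2 : ℝ) • T m - T u := by
  choose τ hτ using hrange m
  have hτ_inv : Involutive τ := fun x => hinj <| by rw [hτ, hτ, sub_sub_cancel]
  have hτm : τ m = m := hinj <| by rw [hτ, two_smul, add_sub_cancel_right]
  obtain ⟨z, hz⟩ : ∃ z, τ u = z := ⟨_, rfl⟩
  have hτz : τ z = u := hz ▸ hτ_inv u
  have hσ_inv : Involutive fun x => u + z - x := fun x => sub_sub_cancel _ _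
  let d : PseudoMetric E ℝ :=
    ⟨fun x y => ‖T x - T y‖, fun _ => by simp, fun _ _ => norm_sub_rev _ _,
      fun _ _ _ => norm_sub_le_norm_sub_add_norm_sub _ _ _⟩
  have hσ_iso : ∀ x y, d (u + z - x) (u + z - y) = d x y := fun x y =>
    hT _ _ _ _ (by rw [sub_sub_sub_cancel_left, norm_sub_rev])
  have hτ_iso : ∀ x y, d (τ x) (τ y) = d x y := fun x y => by
    change ‖_‖ = ‖_‖
    rw [hτ, hτ, sub_sub_sub_cancel_left, norm_sub_rev]
  have hτ_dist : ∀ x, d x (τ x) = 2 ^ p * d x m := fun x => by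
    have h2 : T x - ((2 : ℝ) • T m - T x) = (2 : ℝ) • (T x - T m) := by
      rw [smul_sub, two_smul, two_smul]; abel
    change ‖_‖ = _ * ‖_‖
    rw [hτ, h2, PNormedSpace.norm_smul, abs_two]
  have hσm : u + z - τ m = m :=
    d.apply_eq_of_expanding_reflection
      (fun x y h => hinj (sub_eq_zero.1 (norm_eq_zero.1 h))) (Real.one_lt_rpow one_lt_two hp)
      (hτ_inv.toPerm τ) hτ_iso hz hτz hτm hτ_dist
      (hσ_inv.toPerm _ * hτ_inv.toPerm τ) (fun x y => (hσ_iso _ _).trans (hτ_iso x y))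
      (by simp [hz]) (by simp [hτz])
  rw [hτm] at hσm
  have hz_eq : (2 : ℝ) • m - u = z := by linear_combination (norm := module) -hσm
  rw [hz_eq, ← hz, hτ]

theorem exists_norm_map_le_of_not_injective [PNormedSpace p E] (hp : 0 < p)
    (hT_cont : Continuous T) (hT0 : T 0 = 0) (hT : PreservesEqualityOfDistance T)
    (hinj : ¬Injective T) : ∃ M, ∀ x, ‖T x‖ ≤ M := by
  obtain ⟨a, b, hab, hne⟩ : ∃ a b, T a = T b ∧ a ≠ b := by simpa [Injective] using hinj
  have := PNormedSpace.continuousSMul hp (E := E)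
  have hper : Periodic (fun s : ℝ => ‖T (s • (a - b))‖) 1 := fun s => by
    have : T ((s + 1) • (a - b)) = T (s • (a - b)) := by
      rw [← sub_eq_zero, ← norm_eq_zero,
        hT _ _ a b (by rw [add_smul, one_smul, add_sub_cancel_left]), hab, sub_self, norm_zero]
    simp only [this]
  obtain ⟨M, hM⟩ := (hper.isBounded_of_continuous one_ne_zero (by fun_prop)).bddAbove
  refine ⟨M, fun x => ?_⟩
  obtain ⟨s, hs⟩ := PNormedSpace.exists_norm_smul_eq hp (norm_pos_iff.2 (sub_ne_zero.2 hne))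
    (norm_nonneg x)
  have hx : ‖T x‖ = ‖T (s • (a - b))‖ := by
    simpa [hT0] using hT x 0 (s • (a - b)) 0 (by simp [hs])
  exact hx ▸ hM (mem_range_self s)

theorem eq_zero_of_not_injective [Module ℝ F] [PNormedSpace p E] [PNormedSpace p F] (hp : 0 < p)
    (hT_cont : Continuous T) (hT0 : T 0 = 0) (hT : PreservesEqualityOfDistance T)
    (hrange : ∀ x y, (2 : ℝ) • T x - T y ∈ range T) (hinj : ¬Injective T) : T = 0 := by
  obtain ⟨M, hM⟩ := exists_norm_map_le_of_not_injective hp hT_cont hT0 hT hinj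
  funext x
  refine PNormedSpace.eq_zero_of_forall_norm_natCast_smul_le hp (M := M) fun n => ?_
  obtain ⟨y, hy⟩ := natCast_smul_mem_range hT0 hrange x n
  exact hy ▸ hM y

end PreservesEqualityOfDistance

theorem linear_of_preserves_equality_of_distance_pnormed_general
    {E F : Type*} [AddCommGroup E] [Module ℝ E] [AddCommGroup F] [Module ℝ F]
    {p : ℝ} (hp0 : 0 < p)
    (νE : PNorm p E) (νF : PNorm p F)
    (T : E → F)
    (hcont : ∀ (x : E) (ε : ℝ), 0 < ε → ∃ δ : ℝ, 0 < δ ∧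
      ∀ y : E, νE.toFun (y - x) < δ → νF.toFun (T y - T x) < ε)
    (hT0 : T 0 = 0)
    (hgauge : ∃ φ : ℝ → ℝ, (∀ t : ℝ, 0 ≤ t → 0 ≤ φ t) ∧
      ∀ x y : E, νF.toFun (T x - T y) = φ (νE.toFun (x - y)))
    (hrange : ∀ x y : E, (2 : ℝ) • T x - T y ∈ Set.range T) :
    IsLinearMap ℝ T := by
  let := νE.toAddGroupNorm.toNormedAddCommGroup
  let := νF.toAddGroupNorm.toNormedAddCommGroup
  have : PNormedSpace p E := ⟨νE.smul_eq⟩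
  have : PNormedSpace p F := ⟨νF.smul_eq⟩
  have := PNormedSpace.continuousSMul hp0 (E := E)
  have := PNormedSpace.continuousSMul hp0 (E := F)
  have hT_cont : Continuous T := Metric.continuous_iff.2 fun x ε hε =>
    (hcont x ε hε).imp fun _ ⟨hδ, h⟩ => ⟨hδ, fun y hy => by
      rw [dist_eq_norm] at hy ⊢; exact h y hy⟩
  obtain ⟨φ, -, hφ⟩ := hgauge
  have hT : PreservesEqualityOfDistance T :=
    fun x y x' y' h => (hφ x y).trans ((congrArg φ h).trans (hφ x' y').symm)
  by_cases hinj : Injective T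
  · have hadd := map_add_of_map_two_smul_sub hT0 (map_two_smul_sub_of_injective hp0 hinj hT hrange)
    exact ⟨hadd, map_real_smul (AddMonoidHom.mk' T hadd) hT_cont⟩
  · rw [eq_zero_of_not_injective hp0 hT_cont hT0 hT hrange hinj]
    exact (0 : E →ₗ[ℝ] F).isLinear

/-- **Corollary 2.3 (i).** Let `0 < p ≤ 1` and let `E, F` be `p`-normed spaces.
Let `T : E → F` be a continuous map with `T 0 = 0` which preserves equality of
distance and satisfies `2·Tx - Ty ∈ T(E)` for all `x, y ∈ E`.  Then `T` is linear. -/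
theorem linear_of_preserves_equality_of_distance_pnormed
    {E F : Type*} [AddCommGroup E] [Module ℝ E] [AddCommGroup F] [Module ℝ F]
    {p : ℝ} (hp0 : 0 < p) (hp1 : p ≤ 1)
    (νE : PNorm p E) (νF : PNorm p F)
    (T : E → F)
    (hcont : ∀ (x : E) (ε : ℝ), 0 < ε → ∃ δ : ℝ, 0 < δ ∧
      ∀ y : E, νE.toFun (y - x) < δ → νF.toFun (T y - T x) < ε)
    (hT0 : T 0 = 0)
    (hgauge : ∃ φ : ℝ → ℝ, (∀ t : ℝ, 0 ≤ t → 0 ≤ φ t) ∧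
      ∀ x y : E, νF.toFun (T x - T y) = φ (νE.toFun (x - y)))
    (hrange : ∀ x y : E, (2 : ℝ) • T x - T y ∈ Set.range T) :
    IsLinearMap ℝ T :=
  linear_of_preserves_equality_of_distance_pnormed_general hp0 νE νF T hcont hT0 hgauge hrange
end

section
/- Let E and F be F*-spaces such that there exists r > 0 with α_F(r) := inf{‖2x‖/‖x‖ : x ∈ F, 0 < ‖2x‖ ≤ r} > 1. Let V : E → F be an isometry (‖V x − V y‖ = ‖x − y‖ for all x, y ∈ E) with V(0) = 0, satisfying 2·V(x) − V(y) ∈ V(E) for all x, y ∈ E. Then V is (real) linear. -/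
/-!
Pulling the point reflections `y ↦ 2 V m - y` of `F` back through `V` gives, for each `m`, an
isometric involution `R` of `E` fixing `m`. As in Väisälä's proof of the Mazur–Ulam theorem, the
isometries `e` of `E` fixing `a` and `R a` are stable under `e ↦ R e⁻¹ R e`, which turns the
displacement `d(e m, m)` into `‖2 (V m - V (e m))‖`. When `a` is close to `m` this is at least
`α_F(r) d(e m, m)` with `α_F(r) > 1`, so bounded displacements must all vanish; for
`e x = a + R a - R x` this says `R a = 2 m - a`. Thus `V` preserves midpoints of nearby points,
dyadic subdivision makes this global, and an additive map that is continuous for the `F`-norms is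
`ℚ`-linear, hence `ℝ`-linear since `t ↦ t • x` is continuous.
-/

/-- An `F`-norm on a real vector space `E`: a non-negative function `‖·‖` such that
(i) `‖x‖ = 0` iff `x = 0`; (ii) `‖a • x‖ = ‖x‖` when `|a| = 1`;
(iii) `‖x + y‖ ≤ ‖x‖ + ‖y‖`; (iv) `‖aₙ • x‖ → 0` whenever `aₙ → 0`;
(v) `‖a • xₙ‖ → 0` whenever `‖xₙ‖ → 0`.  A real vector space equipped with an
`F`-norm (and the translation-invariant metric `d(x,y) = ‖x - y‖`) is an `F*`-space. -/
structure FNorm (E : Type*) [AddCommGroup E] [Module ℝ E] where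
  toFun : E → ℝ
  nonneg : ∀ x, 0 ≤ toFun x
  eq_zero_iff : ∀ x, toFun x = 0 ↔ x = 0
  smul_abs_one : ∀ (a : ℝ) (x : E), |a| = 1 → toFun (a • x) = toFun x
  add_le : ∀ x y, toFun (x + y) ≤ toFun x + toFun y
  tendsto_smul_left : ∀ (x : E) (a : ℕ → ℝ),
    Filter.Tendsto a Filter.atTop (nhds 0) →
    Filter.Tendsto (fun n => toFun (a n • x)) Filter.atTop (nhds 0)
  tendsto_smul_right : ∀ (a : ℝ) (xs : ℕ → E),
    Filter.Tendsto (fun n => toFun (xs n)) Filter.atTop (nhds 0) →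
    Filter.Tendsto (fun n => toFun (a • xs n)) Filter.atTop (nhds 0)

open Filter Set Topology

namespace FNorm

variable {E : Type*} [AddCommGroup E] [Module ℝ E] (ν : FNorm E)

def toAddGroupNorm : AddGroupNorm E where
  toFun := ν.toFun
  map_zero' := (ν.eq_zero_iff 0).2 rfl
  add_le' := ν.add_le
  neg' x := by simpa using ν.smul_abs_one (-1) x (by norm_num)
  eq_zero_of_map_eq_zero' x := (ν.eq_zero_iff x).1

-- The constant `α_F(r)` of the paper.
noncomputable def doublingRatio (r : ℝ) : ℝ :=
  sInf {t : ℝ | ∃ x : E, 0 < ν.toFun ((2 : ℝ) • x) ∧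
    ν.toFun ((2 : ℝ) • x) ≤ r ∧ t = ν.toFun ((2 : ℝ) • x) / ν.toFun x}

theorem doublingRatio_mul_le {r : ℝ} {x : E} (hx : ν.toFun ((2 : ℝ) • x) ≤ r) :
    ν.doublingRatio r * ν.toFun x ≤ ν.toFun ((2 : ℝ) • x) := by
  rcases eq_or_ne x 0 with rfl | hx0
  · simp [(ν.eq_zero_iff 0).2 rfl]
  have h2x : 0 < ν.toFun ((2 : ℝ) • x) :=
    (ν.nonneg _).lt_of_ne' fun h => hx0 (by simpa using (ν.eq_zero_iff _).1 h)
  have hνx : 0 < ν.toFun x := (ν.nonneg x).lt_of_ne' fun h => hx0 ((ν.eq_zero_iff x).1 h)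
  have hbdd : BddBelow {t : ℝ | ∃ x : E, 0 < ν.toFun ((2 : ℝ) • x) ∧
      ν.toFun ((2 : ℝ) • x) ≤ r ∧ t = ν.toFun ((2 : ℝ) • x) / ν.toFun x} :=
    ⟨0, by rintro t ⟨y, -, -, rfl⟩; exact div_nonneg (ν.nonneg _) (ν.nonneg _)⟩
  rw [← le_div_iff₀ hνx]
  exact csInf_le hbdd ⟨x, h2x, hx, rfl⟩

theorem tendsto_smul_nhds_zero (x : E) :
    Tendsto (fun a : ℝ => ν.toFun (a • x)) (𝓝 0) (𝓝 0) :=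
  tendsto_nhds_iff_seq_tendsto.2 fun a ha => ν.tendsto_smul_left x a ha

theorem exists_two_inv_pow_smul_le (x : E) {ε : ℝ} (hε : 0 < ε) :
    ∃ n : ℕ, ν.toFun ((2⁻¹ : ℝ) ^ n • x) ≤ ε :=
  (((ν.tendsto_smul_nhds_zero x).comp (tendsto_pow_atTop_nhds_zero_of_lt_one (by norm_num)
    (by norm_num))).eventually (ge_mem_nhds hε)).exists

end FNorm

theorem eq_zero_of_forall_exists_mul_le {ι : Type*} {d : ι → ℝ} (hd : ∀ i, 0 ≤ d i)
    (hbdd : BddAbove (range d)) {α : ℝ} (hα : 1 < α) (hgrow : ∀ i, ∃ j, α * d i ≤ d j) (i : ι) :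
    d i = 0 := by
  have : Nonempty ι := ⟨i⟩
  have hc : (⨆ j, d j) ≤ (⨆ j, d j) / α := ciSup_le fun j => by
    obtain ⟨k, hk⟩ := hgrow j
    rw [le_div_iff₀' (by linarith)]
    exact hk.trans (le_ciSup hbdd k)
  have hc0 : (⨆ j, d j) ≤ 0 := by
    have : 0 ≤ ⨆ j, d j := Real.iSup_nonneg hd
    rw [le_div_iff₀ (by linarith)] at hc
    nlinarith
  exact le_antisymm ((le_ciSup hbdd i).trans hc0) (hd i)

section Reflection

variable {E F : Type*} [NormedAddCommGroup E] [NormedAddCommGroup F] {V : E → F}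

theorem Isometry.exists_isometryEquiv_map_eq_two_nsmul_sub (hV : Isometry V)
    (hrange : ∀ x y, 2 • V x - V y ∈ range V) (m : E) :
    ∃ R : E ≃ᵢ E, ∀ x, V (R x) = 2 • V m - V x := by
  choose T hT using hrange m
  have hinv : Function.Involutive T := fun x => hV.injective (by rw [hT, hT]; abel)
  have hiso : Isometry T := Isometry.of_dist_eq fun x y => by
    rw [← hV.dist_eq, hT, hT, dist_sub_left, hV.dist_eq]
  exact ⟨⟨hinv.toPerm T, hiso⟩, hT⟩

theorem Isometry.dist_conj_apply_eq_norm_two_nsmul (hV : Isometry V) {m : E} {R : E ≃ᵢ E}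
    (hR : ∀ x, V (R x) = 2 • V m - V x) (e : E ≃ᵢ E) :
    dist ((R * e⁻¹ * R * e) m) m = ‖2 • (V m - V (e m))‖ := by
  have hRm : R m = m := hV.injective (by rw [hR, two_nsmul]; abel)
  calc dist ((R * e⁻¹ * R * e) m) m = dist (e⁻¹ (R (e m))) (e⁻¹ (e m)) := by
        rw [IsometryEquiv.inv_apply_self]; nth_rw 2 [← hRm]; exact R.dist_eq _ _
    _ = dist (V (R (e m))) (V (e m)) := by rw [e⁻¹.dist_eq, hV.dist_eq]
    _ = ‖2 • (V m - V (e m))‖ := by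
        rw [hR, dist_eq_norm, nsmul_sub, two_nsmul (V (e m))]; abel_nf

theorem Isometry.add_apply_eq_two_nsmul (hV : Isometry V) {m : E} {R : E ≃ᵢ E}
    (hR : ∀ x, V (R x) = 2 • V m - V x) {α r : ℝ} (hα : 1 < α)
    (hdouble : ∀ w : F, ‖2 • w‖ ≤ r → α * ‖w‖ ≤ ‖2 • w‖) {a : E} (ha : 2 * dist a m ≤ r) :
    a + R a = 2 • m := by
  have hRm : R m = m := hV.injective (by rw [hR, two_nsmul]; abel)
  have hRR : ∀ x, R (R x) = x := fun x => hV.injective (by rw [hR, hR]; abel)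
  set S := {e : E ≃ᵢ E | e a = a ∧ e (R a) = R a}
  have hconj : ∀ e ∈ S, R * e⁻¹ * R * e ∈ S := by
    rintro e ⟨he₁, he₂⟩
    have he₁' : e⁻¹ a = a := by nth_rw 1 [← he₁]; exact e.inv_apply_self a
    refine ⟨?_, ?_⟩ <;> simp only [IsometryEquiv.mul_apply]
    · rw [he₁, ← he₂, IsometryEquiv.inv_apply_self, hRR]
    · rw [he₂, hRR, he₁']
  have hbound : ∀ e ∈ S, dist (e m) m ≤ r := fun e he => by
    calc dist (e m) m ≤ dist (e m) a + dist a m := dist_triangle _ _ _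
      _ = 2 * dist a m := by nth_rw 1 [← he.1]; rw [e.dist_eq, dist_comm]; ring
      _ ≤ r := ha
  have hgrow : ∀ e ∈ S, α * dist (e m) m ≤ dist ((R * e⁻¹ * R * e) m) m := fun e he => by
    have hdisp := hV.dist_conj_apply_eq_norm_two_nsmul hR e
    rw [hdisp, ← hV.dist_eq, dist_comm, dist_eq_norm]
    exact hdouble _ (hdisp ▸ hbound _ (hconj e he))
  set e₀ := R.trans (IsometryEquiv.subLeft (a + R a))
  have he₀ : e₀ ∈ S := ⟨by simp [e₀], by simp [e₀, hRR]⟩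
  have h : dist (a + R a - m) m = 0 := by
    simpa only [e₀, IsometryEquiv.trans_apply, IsometryEquiv.subLeft_apply, hRm] using
      eq_zero_of_forall_exists_mul_le (d := fun e : S => dist ((e : E ≃ᵢ E) m) m)
        (fun _ => dist_nonneg) ⟨r, forall_mem_range.2 fun e => hbound e e.2⟩ hα
        (fun e => ⟨⟨_, hconj e e.2⟩, hgrow e e.2⟩) ⟨e₀, he₀⟩
  rw [dist_eq_zero, sub_eq_iff_eq_add] at h
  rw [h, two_nsmul]

end Reflection

section Midpoint

variable {E F : Type*} [AddCommGroup E] [Module ℝ E] [AddCommGroup F] [Module ℝ F]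

theorem map_midpoint_of_pow_smul_mem {V : E → F} {S : Set E}
    (hS : ∀ a b, b - a ∈ S → V (midpoint ℝ a b) = midpoint ℝ (V a) (V b)) (n : ℕ) {a b : E}
    (hn : (2⁻¹ : ℝ) ^ n • (b - a) ∈ S) : V (midpoint ℝ a b) = midpoint ℝ (V a) (V b) := by
  induction n generalizing a b with
  | zero => exact hS a b (by simpa using hn)
  | succ n ih =>
    set m := midpoint ℝ a b
    have half : ∀ x y : E, y - x = (2⁻¹ : ℝ) • (b - a) →
        V (midpoint ℝ x y) = midpoint ℝ (V x) (V y) := fun x y hxy =>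
      ih (by rwa [hxy, smul_smul, ← pow_succ])
    have h₁ := half a m (by simp only [m, midpoint_eq_smul_add, invOf_eq_inv]; module)
    have h₂ := half m b (by simp only [m, midpoint_eq_smul_add, invOf_eq_inv]; module)
    have h₃ := half (midpoint ℝ a m) (midpoint ℝ m b)
      (by simp only [m, midpoint_eq_smul_add, invOf_eq_inv]; module)
    have hm : midpoint ℝ (midpoint ℝ a m) (midpoint ℝ m b) = m := by
      simp only [m, midpoint_eq_smul_add, invOf_eq_inv]; module
    rw [hm, h₁, h₂] at h₃
    simp only [midpoint_eq_smul_add, invOf_eq_inv] at h₃ ⊢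
    linear_combination (norm := module) (2 : ℝ) • h₃

theorem Isometry.map_midpoint_of_two_mul_norm_le {E F : Type*} [NormedAddCommGroup E]
    [Module ℝ E] [NormedAddCommGroup F] [Module ℝ F] {V : E → F} (hV : Isometry V)
    (hrange : ∀ x y, 2 • V x - V y ∈ range V) {α r : ℝ} (hα : 1 < α)
    (hdouble : ∀ w : F, ‖2 • w‖ ≤ r → α * ‖w‖ ≤ ‖2 • w‖) {a b : E}
    (hab : 2 * ‖(2⁻¹ : ℝ) • (b - a)‖ ≤ r) : V (midpoint ℝ a b) = midpoint ℝ (V a) (V b) := by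
  obtain ⟨R, hR⟩ := hV.exists_isometryEquiv_map_eq_two_nsmul_sub hrange (midpoint ℝ a b)
  have ha : 2 * dist a (midpoint ℝ a b) ≤ r := by
    rwa [dist_comm, dist_eq_norm, midpoint_sub_left, invOf_eq_inv]
  have hRa : R a = b := add_left_cancel <| (hV.add_apply_eq_two_nsmul hR hα hdouble ha).trans <| by
    rw [two_nsmul, midpoint_add_self]
  have hVb : V b = 2 • V (midpoint ℝ a b) - V a := hRa ▸ hR a
  rw [eq_comm, midpoint_eq_iff', Equiv.pointReflection_apply, hVb, vsub_eq_sub, vadd_eq_add,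
    two_nsmul]
  abel

end Midpoint

theorem map_real_smul_of_continuous_smul_const {E F : Type*} [AddCommGroup E] [Module ℝ E]
    [TopologicalSpace E] [AddCommGroup F] [Module ℝ F] [TopologicalSpace F] [T2Space F]
    (f : E →+ F) (hf : Continuous f) (hE : ∀ x : E, Continuous fun c : ℝ => c • x)
    (hF : ∀ y : F, Continuous fun c : ℝ => c • y) (c : ℝ) (x : E) : f (c • x) = c • f x :=
  congr_fun (Rat.isDenseEmbedding_coe_real.dense.equalizer (hf.comp (hE x)) (hF (f x))
    (funext fun q => map_ratCast_smul f ℝ ℝ q x)) c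

theorem continuous_smul_const_of_tendsto_norm {E : Type*} [SeminormedAddCommGroup E] [Module ℝ E]
    {x : E} (hx : Tendsto (fun a : ℝ => ‖a • x‖) (𝓝 0) (𝓝 0)) : Continuous fun c : ℝ => c • x :=
  continuous_iff_continuousAt.2 fun c₀ => tendsto_iff_norm_sub_tendsto_zero.2 <| by
    simp only [← sub_smul]
    exact hx.comp (tendsto_sub_nhds_zero_iff.2 tendsto_id)

/-- **Corollary 2.4.** Let `E, F` be `F*`-spaces such that for some `r > 0`,
`α_F(r) = inf {‖2x‖/‖x‖ : x ∈ F, 0 < ‖2x‖ ≤ r} > 1`.  Let `V : E → F` be an isometry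
(`‖Vx - Vy‖ = ‖x - y‖`) with `V 0 = 0` such that `2·Vx - Vy ∈ V(E)` for all `x, y`.
Then `V` is linear. -/
theorem linear_of_isometry_fstar
    {E F : Type*} [AddCommGroup E] [Module ℝ E] [AddCommGroup F] [Module ℝ F]
    (νE : FNorm E) (νF : FNorm F)
    (halpha : ∃ r : ℝ, 0 < r ∧
      1 < sInf {t : ℝ | ∃ x : F, 0 < νF.toFun ((2 : ℝ) • x) ∧
        νF.toFun ((2 : ℝ) • x) ≤ r ∧ t = νF.toFun ((2 : ℝ) • x) / νF.toFun x})
    (V : E → F)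
    (hV0 : V 0 = 0)
    (hiso : ∀ x y : E, νF.toFun (V x - V y) = νE.toFun (x - y))
    (hrange : ∀ x y : E, (2 : ℝ) • V x - V y ∈ Set.range V) :
    IsLinearMap ℝ V := by
  obtain ⟨r, hr, hα⟩ := halpha
  let _ := νE.toAddGroupNorm.toNormedAddCommGroup
  let _ := νF.toAddGroupNorm.toNormedAddCommGroup
  have hV : Isometry V := Isometry.of_dist_eq fun x y => by
    rw [dist_eq_norm, dist_eq_norm]; exact hiso x y
  have hrange' : ∀ x y, 2 • V x - V y ∈ range V := fun x y => by
    simpa only [ofNat_smul_eq_nsmul] using hrange x y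
  have hdouble : ∀ w : F, ‖2 • w‖ ≤ r → νF.doublingRatio r * ‖w‖ ≤ ‖2 • w‖ := fun w hw => by
    rw [← ofNat_smul_eq_nsmul ℝ] at hw ⊢
    exact νF.doublingRatio_mul_le hw
  have hmid : ∀ a b, V (midpoint ℝ a b) = midpoint ℝ (V a) (V b) := fun a b => by
    obtain ⟨n, hn⟩ := νE.exists_two_inv_pow_smul_le ((2⁻¹ : ℝ) • (b - a)) (half_pos hr)
    refine map_midpoint_of_pow_smul_mem (S := {u | 2 * ‖(2⁻¹ : ℝ) • u‖ ≤ r})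
      (fun a b => hV.map_midpoint_of_two_mul_norm_le hrange' hα hdouble) n ?_
    show 2 * ‖(2⁻¹ : ℝ) • (2⁻¹ : ℝ) ^ n • (b - a)‖ ≤ r
    rw [smul_comm]
    linarith [show ‖(2⁻¹ : ℝ) ^ n • (2⁻¹ : ℝ) • (b - a)‖ ≤ r / 2 from hn]
  let f := AddMonoidHom.ofMapMidpoint ℝ ℝ V hV0 hmid
  exact ⟨f.map_add, map_real_smul_of_continuous_smul_const f hV.continuous
    (fun x => continuous_smul_const_of_tendsto_norm (νE.tendsto_smul_nhds_zero x))
    (fun y => continuous_smul_const_of_tendsto_norm (νF.tendsto_smul_nhds_zero y))⟩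
end

section
/- Let E and F be real normed spaces with F strictly convex, and let V : E → F be an isometry (‖V x − V y‖ = ‖x − y‖ for all x, y ∈ E) with V(0) = 0. Then 2·V(x) − V(y) ∈ V(E) for all x, y ∈ E; indeed 2·V(x) − V(y) = V(2x − y) for all x, y ∈ E. -/
/-- **Remark 3.** Let `E, F` be real normed spaces with `F` strictly convex (if
`u, v ≠ 0` and `‖u + v‖ = ‖u‖ + ‖v‖` then `u = λ • v` for some `λ > 0`) and let
`V : E → F` be an isometry with `V 0 = 0`.  Then `2·Vx - Vy = V(2x - y)`, so in
particular `2·Vx - Vy ∈ V(E)`, for all `x, y ∈ E`. -/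
theorem two_smul_sub_mem_range_of_isometry_strictConvex
    {E F : Type*} [NormedAddCommGroup E] [NormedSpace ℝ E]
    [NormedAddCommGroup F] [NormedSpace ℝ F]
    (hsc : ∀ u v : F, u ≠ 0 → v ≠ 0 → ‖u + v‖ = ‖u‖ + ‖v‖ →
      ∃ lam : ℝ, 0 < lam ∧ u = lam • v)
    (V : E → F) (hV0 : V 0 = 0)
    (hiso : ∀ x y : E, ‖V x - V y‖ = ‖x - y‖) :
    ∀ x y : E, (2 : ℝ) • V x - V y ∈ Set.range V ∧
      (2 : ℝ) • V x - V y = V ((2 : ℝ) • x - y) := by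
  intro x y
  set p : E := (2 : ℝ) • x - y with hp
  suffices h : (2 : ℝ) • V x - V y = V p by
    exact ⟨h ▸ Set.mem_range_self p, h⟩
  by_cases hxy : x = y
  · subst hxy
    have hpx : p = x := by rw [hp, two_smul]; abel
    rw [hpx, two_smul]; abel
  · have hd : ‖x - y‖ ≠ 0 := by
      simpa [sub_eq_zero] using hxy
    set u : F := V p - V x with hu
    set v : F := V x - V y with hv
    have hpx : p - x = x - y := by rw [hp, two_smul]; abel
    have hpy : p - y = (2 : ℝ) • (x - y) := by rw [hp]; module
    have hun : ‖u‖ = ‖x - y‖ := by rw [hu, hiso, hpx]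
    have hvn : ‖v‖ = ‖x - y‖ := by rw [hv, hiso]
    have huv : ‖u + v‖ = ‖u‖ + ‖v‖ := by
      have : u + v = V p - V y := by rw [hu, hv]; abel
      rw [this, hiso, hpy, hun, hvn, norm_smul]
      simp; ring
    have hu0 : u ≠ 0 := by
      intro h; rw [h, norm_zero] at hun; exact hd hun.symm
    have hv0 : v ≠ 0 := by
      intro h; rw [h, norm_zero] at hvn; exact hd hvn.symm
    obtain ⟨lam, hlam, heq⟩ := hsc u v hu0 hv0 huv
    have hlam1 : lam = 1 := by
      have := hun.trans hvn.symm
      rw [heq, norm_smul, Real.norm_eq_abs, abs_of_pos hlam] at this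
      have hv' : ‖v‖ ≠ 0 := by rwa [hvn]
      exact mul_right_cancel₀ hv' (by rw [one_mul]; linarith)
    rw [hlam1, one_smul, hu, hv] at heq
    linear_combination (norm := module) -heq
end

section
/- Let E and F be real normed spaces with F strictly convex, and let V : E → F be an isometry (‖V x − V y‖ = ‖x − y‖ for all x, y ∈ E) with V(0) = 0. Then V is (real) linear. -/
/-- **(Baker).** Let `E, F` be real normed spaces with `F` strictly convex (if
`u, v ≠ 0` and `‖u + v‖ = ‖u‖ + ‖v‖` then `u = λ • v` for some `λ > 0`) and let
`V : E → F` be a (not necessarily surjective) isometry with `V 0 = 0`.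
Then `V` is linear. -/
theorem linear_of_isometry_strictConvex
    {E F : Type*} [NormedAddCommGroup E] [NormedSpace ℝ E]
    [NormedAddCommGroup F] [NormedSpace ℝ F]
    (hsc : ∀ u v : F, u ≠ 0 → v ≠ 0 → ‖u + v‖ = ‖u‖ + ‖v‖ →
      ∃ lam : ℝ, 0 < lam ∧ u = lam • v)
    (V : E → F) (hV0 : V 0 = 0)
    (hiso : ∀ x y : E, ‖V x - V y‖ = ‖x - y‖) :
    IsLinearMap ℝ V := by
  -- Step 1: V preserves midpoints.
  have hmid : ∀ x y : E, V (midpoint ℝ x y) = midpoint ℝ (V x) (V y) := by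
    intro x y
    by_cases hxy : x = y
    · subst hxy; simp
    · set m := midpoint ℝ x y with hm
      have h1 : ‖V x - V m‖ = ‖x - y‖ / 2 := by
        rw [hiso]
        have : x - m = (2:ℝ)⁻¹ • (x - y) := by
          rw [hm, midpoint_eq_smul_add, invOf_eq_inv, smul_add]
          module
        rw [this, norm_smul]
        simp [div_eq_inv_mul]
      have h2 : ‖V m - V y‖ = ‖x - y‖ / 2 := by
        rw [hiso]
        have : m - y = (2:ℝ)⁻¹ • (x - y) := by
          rw [hm, midpoint_eq_smul_add, invOf_eq_inv, smul_add]
          module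
        rw [this, norm_smul]
        simp [div_eq_inv_mul]
      have hxyn : ‖x - y‖ ≠ 0 := by
        simp only [ne_eq, norm_eq_zero, sub_eq_zero]; exact hxy
      have hu : V x - V m ≠ 0 := by
        intro h; rw [h, norm_zero] at h1
        exact hxyn (by linarith)
      have hv : V m - V y ≠ 0 := by
        intro h; rw [h, norm_zero] at h2
        exact hxyn (by linarith)
      have hsum : ‖(V x - V m) + (V m - V y)‖ = ‖V x - V m‖ + ‖V m - V y‖ := by
        rw [h1, h2]
        have : (V x - V m) + (V m - V y) = V x - V y := by abel
        rw [this, hiso]; ring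
      obtain ⟨lam, hlam, heq⟩ := hsc _ _ hu hv hsum
      have hnorm : lam * ‖V m - V y‖ = ‖V m - V y‖ := by
        have := congrArg norm heq
        rw [norm_smul, Real.norm_eq_abs, abs_of_pos hlam] at this
        rw [← this, h1, h2]
      have hlam1 : lam = 1 := by
        have hv' : ‖V m - V y‖ ≠ 0 := norm_ne_zero_iff.mpr hv
        exact mul_right_cancel₀ hv' (by rw [hnorm, one_mul])
      rw [hlam1, one_smul] at heq
      have key : V x + V y = (2:ℝ) • V m := by
        rw [two_smul]; exact sub_eq_sub_iff_add_eq_add.mp heq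
      rw [midpoint_eq_smul_add, key, smul_smul, invOf_eq_inv]
      norm_num
  -- Step 2: additivity.
  have hadd : ∀ x y : E, V (x + y) = V x + V y := by
    intro x y
    have h1 : midpoint ℝ (x + y) 0 = midpoint ℝ x y := by
      rw [midpoint_eq_smul_add, midpoint_eq_smul_add, add_zero]
    have h2 := hmid (x + y) 0
    rw [h1, hmid x y, hV0] at h2
    have := congrArg (fun z => (2:ℝ) • z) h2
    simpa [midpoint_eq_smul_add, smul_smul, invOf_eq_inv] using this.symm
  -- Step 3: continuity.
  have hcont : Continuous V := by
    have : LipschitzWith 1 V := by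
      apply LipschitzWith.of_dist_le_mul
      intro x y
      rw [dist_eq_norm, dist_eq_norm, hiso]
      simp
    exact this.continuous
  -- Step 4: real linearity from additivity and continuity.
  let f : E →+ F := AddMonoidHom.mk' V hadd
  have hsmul : ∀ (c : ℝ) (x : E), V (c • x) = c • V x := fun c x =>
    map_real_smul f hcont c x
  exact ⟨hadd, hsmul⟩
end

section
/- Let E be an F*-space, let F be a real vector space, and let T : E → F be a map. Suppose there exists δ > 0 such that 2·T((a + b)/2) = T(a) + T(b) for all a, b ∈ E with ‖(a − b)/2‖ ≤ δ. Then 2·T((a + b)/2) = T(a) + T(b) for all a, b ∈ E. -/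
/-- **Step 2 of Theorem 2.2.** Let `E` be an `F*`-space, `F` a real vector space and
`T : E → F`.  If there is `δ > 0` such that `2·T((a+b)/2) = T a + T b` whenever
`‖(a-b)/2‖ ≤ δ`, then `2·T((a+b)/2) = T a + T b` for all `a, b ∈ E`. -/
theorem midpoint_identity_global_of_local
    {E F : Type*} [AddCommGroup E] [Module ℝ E] [AddCommGroup F] [Module ℝ F]
    (νE : FNorm E) (T : E → F)
    (hloc : ∃ δ : ℝ, 0 < δ ∧ ∀ a b : E, νE.toFun ((2⁻¹ : ℝ) • (a - b)) ≤ δ →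
      (2 : ℝ) • T ((2⁻¹ : ℝ) • (a + b)) = T a + T b) :
    ∀ a b : E, (2 : ℝ) • T ((2⁻¹ : ℝ) • (a + b)) = T a + T b := by
  obtain ⟨δ, hδ, hloc⟩ := hloc
  -- P g : the midpoint identity with displacement g
  set P : E → Prop := fun g => ∀ c : E, (2 : ℝ) • T c = T (c + g) + T (c - g) with hP
  -- local version in terms of P
  have hlocP : ∀ g : E, νE.toFun g ≤ δ → P g := by
    intro g hg c
    have h1 : (2⁻¹ : ℝ) • ((c + g) - (c - g)) = g := by module
    have h2 : (2⁻¹ : ℝ) • ((c + g) + (c - g)) = c := by module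
    have := hloc (c + g) (c - g) (by rw [h1]; exact hg)
    rwa [h2] at this
  -- doubling
  have hdouble : ∀ g : E, P g → P ((2 : ℝ) • g) := by
    intro g hg c
    have h1 := hg (c + g)
    have h2 := hg (c - g)
    have h3 := hg c
    have e1 : c + g + g = c + (2 : ℝ) • g := by module
    have e2 : c + g - g = c := by abel
    have e3 : c - g + g = c := by abel
    have e4 : c - g - g = c - (2 : ℝ) • g := by module
    rw [e1, e2] at h1
    rw [e3, e4] at h2
    have key : (2 : ℝ) • ((2 : ℝ) • T c)
        = (T (c + (2 : ℝ) • g) + T c) + (T c + T (c - (2 : ℝ) • g)) := by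
      rw [h3, smul_add, h1, h2]
    have key2 : T c + T c + (2 : ℝ) • T c
        = T c + T c + (T (c + (2 : ℝ) • g) + T (c - (2 : ℝ) • g)) := by
      rw [two_smul ℝ ((2 : ℝ) • T c)] at key
      calc T c + T c + (2 : ℝ) • T c
          = (2 : ℝ) • T c + (2 : ℝ) • T c := by rw [two_smul ℝ (T c)]
        _ = T (c + (2 : ℝ) • g) + T c + (T c + T (c - (2 : ℝ) • g)) := key
        _ = T c + T c + (T (c + (2 : ℝ) • g) + T (c - (2 : ℝ) • g)) := by abel
    exact add_left_cancel key2
  -- iterate doubling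
  have hiter : ∀ (n : ℕ) (g : E), P g → P ((2 : ℝ) ^ n • g) := by
    intro n
    induction n with
    | zero => intro g hg; simpa using hg
    | succ n ih =>
      intro g hg
      have := hdouble _ (ih g hg)
      have e : (2 : ℝ) • ((2 : ℝ) ^ n • g) = (2 : ℝ) ^ (n + 1) • g := by
        rw [smul_smul, ← pow_succ']
      rwa [e] at this
  -- main claim: P g for all g
  have hall : ∀ g : E, P g := by
    intro g
    have htend := νE.tendsto_smul_left g (fun n => (2⁻¹ : ℝ) ^ n)
      (tendsto_pow_atTop_nhds_zero_of_lt_one (by norm_num) (by norm_num))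
    have hev : ∀ᶠ n in Filter.atTop, νE.toFun ((2⁻¹ : ℝ) ^ n • g) < δ :=
      htend.eventually_lt_const hδ
    obtain ⟨n, hn⟩ := hev.exists
    have h0 : P ((2⁻¹ : ℝ) ^ n • g) := hlocP _ hn.le
    have := hiter n _ h0
    have e : (2 : ℝ) ^ n • ((2⁻¹ : ℝ) ^ n • g) = g := by
      rw [smul_smul, ← mul_pow]
      norm_num
    rwa [e] at this
  intro a b
  have h1 : (2⁻¹ : ℝ) • (a + b) + (2⁻¹ : ℝ) • (a - b) = a := by module
  have h2 : (2⁻¹ : ℝ) • (a + b) - (2⁻¹ : ℝ) • (a - b) = b := by module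
  have := hall ((2⁻¹ : ℝ) • (a - b)) ((2⁻¹ : ℝ) • (a + b))
  rwa [h1, h2] at this
end

section
/- Let 0 < p ≤ 1 and let E and F be p-normed spaces. Let T : E → F be a (real) linear map that preserves equality of distance with gauge function φ : ℝ≥0 → ℝ≥0 (i.e., ‖T x − T y‖ = φ(‖x − y‖) for all x, y ∈ E). Then ‖T x − T y‖ = φ(1)·‖x − y‖ for all x, y ∈ E. -/
/-- Let `0 < p ≤ 1` and let `E, F` be `p`-normed spaces.  If `T : E → F` is a linear
map preserving equality of distance with gauge function `φ`
(`‖Tx - Ty‖ = φ(‖x - y‖)`), then `‖Tx - Ty‖ = φ(1) · ‖x - y‖` for all `x, y ∈ E`. -/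
theorem gauge_of_linear_pnormed
    {E F : Type*} [AddCommGroup E] [Module ℝ E] [AddCommGroup F] [Module ℝ F]
    {p : ℝ} (hp0 : 0 < p) (hp1 : p ≤ 1)
    (νE : PNorm p E) (νF : PNorm p F)
    (T : E → F) (hlin : IsLinearMap ℝ T)
    (φ : ℝ → ℝ) (hφ : ∀ t : ℝ, 0 ≤ t → 0 ≤ φ t)
    (hgauge : ∀ x y : E, νF.toFun (T x - T y) = φ (νE.toFun (x - y))) :
    ∀ x y : E, νF.toFun (T x - T y) = φ 1 * νE.toFun (x - y) := by

  -- Key: ‖T z‖ = φ(‖z‖) for all z.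
  have hT0 : T 0 = 0 := hlin.mk' T |>.map_zero
  have key : ∀ z : E, νF.toFun (T z) = φ (νE.toFun z) := by
    intro z
    have := hgauge z 0
    simpa [hT0] using this
  intro x y
  set z := x - y with hz
  have hTz : T x - T y = T z := by
    rw [hz, hlin.map_sub]
  rw [hgauge x y, ← hz]
  by_cases h0 : z = 0
  · simp [h0, (νE.eq_zero_iff 0).mpr rfl]
    have : φ (νE.toFun (0:E)) = 0 := by
      rw [← key 0, hT0, (νF.eq_zero_iff 0).mpr rfl]
    simpa [(νE.eq_zero_iff 0).mpr rfl] using this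
  · set s := νE.toFun z with hs
    have hs0 : 0 < s := lt_of_le_of_ne (νE.nonneg z) (fun h => h0 ((νE.eq_zero_iff z).mp h.symm))
    set c : ℝ := s ^ (-1/p) with hc
    have hcpos : 0 < c := Real.rpow_pos_of_pos hs0 _
    have hcp : |c| ^ p = s⁻¹ := by
      rw [abs_of_pos hcpos, hc, ← Real.rpow_mul hs0.le, div_mul_cancel₀ _ hp0.ne']
      exact Real.rpow_neg_one s
    have h1 : νE.toFun (c • z) = 1 := by
      rw [νE.smul_eq, hcp, ← hs, inv_mul_cancel₀ hs0.ne']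
    have h2 : νF.toFun (T (c • z)) = s⁻¹ * φ s := by
      rw [hlin.map_smul, νF.smul_eq, hcp, key z, hs]
    have h3 : νF.toFun (T (c • z)) = φ 1 := by rw [key, h1]
    have : φ 1 = s⁻¹ * φ s := by rw [← h3, h2]
    rw [this]
    field_simp
end
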